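/- arXiv:1604.02851 — 2 statements merged into one kernel-verified Lean document; each statement's English description precedes it below -/
import Mathlib

section
/- Let ε, ρ, t, λ be real numbers with t ≠ 0. There exists a nonzero real α' and a real λ ≠ 0 such that t²(1+2ε−2ρ)(3+4ε²−4ρ+4ρ²) − 2λ² = 4/α' with α' > 0, if and only if 1 + 2ε − 2ρ > 0. -/
theorem stmt_1 (ε ρ t : ℝ) (ht : t ≠ 0) :
    (∃ α' l : ℝ, α' ≠ 0 ∧ 0 < α' ∧ l ≠ 0 ∧
      t^2*(1+2*ε-2*ρ)*(3+4*ε^2-4*ρ+4*ρ^2) - 2*l^2 = 4/α') ↔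
    1 + 2*ε - 2*ρ > 0 := by
  have hB : (0:ℝ) < 3+4*ε^2-4*ρ+4*ρ^2 := by nlinarith [sq_nonneg ε, sq_nonneg (2*ρ-1)]
  have ht2 : (0:ℝ) < t^2 := by positivity
  constructor
  · rintro ⟨α', l, hne, hpos, hl, heq⟩
    have h4 : (0:ℝ) < 4/α' := by positivity
    nlinarith [sq_nonneg l, mul_pos ht2 hB]
  · intro hA
    set K := t^2*(1+2*ε-2*ρ)*(3+4*ε^2-4*ρ+4*ρ^2) with hK
    have hKpos : 0 < K := by positivity
    refine ⟨8/K, Real.sqrt K / 2, by positivity, by positivity, ?_, ?_⟩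
    · have := Real.sqrt_pos.mpr hKpos
      positivity
    · have hs : Real.sqrt K ^ 2 = K := Real.sq_sqrt hKpos.le
      field_simp
      nlinarith [hs]
end

section
/- Let r, t be nonzero reals, μ a real, ε, ρ reals with ρ ≥ ε + 1/2, and α' a nonzero real satisfying (X(ε,ρ)t² − 2μ²r⁴)α' = 4r⁴ where X(ε,ρ) = (1 + 2ε − 2ρ)(4ε² + (1−2ρ)² + 2). If μ ≠ 0 then α' < 0. -/
def X (ε ρ : ℝ) : ℝ := (1 + 2*ε - 2*ρ) * (4*ε^2 + (1-2*ρ)^2 + 2)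

theorem stmt_10 (r t μ ε ρ α' : ℝ) (hr : r ≠ 0) (ht : t ≠ 0)
    (h : ρ ≥ ε + 1/2) (hα : α' ≠ 0)
    (heq : (X ε ρ * t^2 - 2*μ^2*r^4) * α' = 4*r^4) (hμ : μ ≠ 0) :
    α' < 0 := by
  have hX : X ε ρ ≤ 0 := by
    have h1 : 1 + 2*ε - 2*ρ ≤ 0 := by linarith
    have h2 : (0:ℝ) < 4*ε^2 + (1-2*ρ)^2 + 2 := by positivity
    exact mul_nonpos_of_nonpos_of_nonneg h1 h2.le
  have hC : X ε ρ * t^2 - 2*μ^2*r^4 < 0 := by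
    have h1 : X ε ρ * t^2 ≤ 0 := mul_nonpos_of_nonpos_of_nonneg hX (sq_nonneg t)
    have h2 : (0:ℝ) < 2*μ^2*r^4 := by positivity
    linarith
  have h4 : (0:ℝ) < 4*r^4 := by positivity
  by_contra hpos
  push_neg at hpos
  nlinarith
end
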